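/- Let ε > 0, m and T positive integers, and k ≥ 2 an integer. Let P, P₀, P₁, …, P_k be probability distributions on {−1,1}^m such that TV(P, P₀) ≤ ε and every point of {−1,1}^m has probability at least e^{−m} under P and under each P_i, 0 ≤ i ≤ k. Let X₁, …, X_T be i.i.d. samples from P, and let j ∈ {0,…,k} be any index maximizing the likelihood ∏_{t=1}^T P_j(X_t). Then with probability at least 1 − 2(k+1)/k² over the samples, TV(P, P_j) ≤ (4m²·ln(k)/T)^{1/4} + √(e^m·ε/2). -/

import Mathlib

/-!
Since every `Q i` is at least `e^{-m}`, each log-likelihood term `log (Q i x)` lies in `[-m, 0]`.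
By Hoeffding's inequality and a union bound over the `k + 1` candidates, with probability at least
`1 - 2(k+1)/k²` every empirical mean `(1/T) ∑ₜ log (Q i Xₜ)` is within
`s = √(4 m² ln k / T)` of its expectation `∑ₓ P x log (Q i x) = -H(P) - KL(P ‖ Q i)`.
A maximiser `j` of the likelihood then satisfies `KL(P ‖ Q j) ≤ KL(P ‖ Q 0) + 2 s`, while
`KL(P ‖ Q 0) ≤ e^m TV(P, Q 0) ≤ e^m ε` because `Q 0 ≥ e^{-m}`. Pinsker's inequality
`TV ≤ √(KL / 2)` and `√(a + b) ≤ √a + √b` conclude.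
-/

open Finset Real
open scoped Classical

noncomputable section

/-- Total variation distance between two distributions on a finite type. -/
def TVdist {Ω : Type*} [Fintype Ω] (P Q : Ω → ℝ) : ℝ := (1 / 2) * ∑ x, |P x - Q x|

lemma Real.sqrt_add_le_sqrt_add_sqrt (x y : ℝ) : √(x + y) ≤ √x + √y := by
  rcases le_total 0 x with hx | hx
  · rcases le_total 0 y with hy | hy
    · rw [Real.sqrt_le_iff]
      refine ⟨by positivity, ?_⟩
      nlinarith [Real.sq_sqrt hx, Real.sq_sqrt hy, Real.sqrt_nonneg x, Real.sqrt_nonneg y]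
    · rw [Real.sqrt_eq_zero_of_nonpos hy, add_zero]; exact Real.sqrt_le_sqrt (by linarith)
  · rw [Real.sqrt_eq_zero_of_nonpos hx, zero_add]; exact Real.sqrt_le_sqrt (by linarith)

section Sampling

variable {Ω : Type*} [Fintype Ω]

/-- Hoeffding's lemma. -/
lemma sum_mul_exp_le_exp_sq {p ψ : Ω → ℝ} {c : ℝ} (hp : ∀ x, 0 ≤ p x) (hp1 : ∑ x, p x = 1)
    (hψ0 : ∑ x, p x * ψ x = 0) (hψc : ∀ x, |ψ x| ≤ c) (hc : 0 < c) (l : ℝ) :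
    ∑ x, p x * exp (l * ψ x) ≤ exp (l ^ 2 * c ^ 2 / 2) := by
  have hchord : ∀ x, exp (l * ψ x) ≤ cosh (l * c) + ψ x / c * sinh (l * c) := fun x => by
    have hr : |ψ x / c| ≤ 1 := by rw [abs_div, abs_of_pos hc, div_le_one hc]; exact hψc x
    convert exp_mul_le_cosh_add_mul_sinh hr (l * c) using 2
    field_simp
  calc ∑ x, p x * exp (l * ψ x)
      ≤ ∑ x, p x * (cosh (l * c) + ψ x / c * sinh (l * c)) :=
        sum_le_sum fun x _ => mul_le_mul_of_nonneg_left (hchord x) (hp x)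
    _ = cosh (l * c) := by
        simp only [mul_add, sum_add_distrib, ← sum_mul, hp1, one_mul, add_eq_left]
        simp only [← mul_assoc, mul_div_assoc', ← sum_mul, ← sum_div, hψ0, zero_mul, zero_div]
    _ ≤ exp ((l * c) ^ 2 / 2) := cosh_le_exp_half_sq _
    _ = exp (l ^ 2 * c ^ 2 / 2) := by ring_nf

/-- The probability that `T` independent samples from the distribution `p` satisfy `E`. -/
def iidProb (p : Ω → ℝ) (T : ℕ) (E : (Fin T → Ω) → Prop) : ℝ :=
  ∑ xs ∈ univ.filter E, ∏ t, p (xs t)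

lemma iidProb_eq_sum_filter (p : Ω → ℝ) (T : ℕ) (E : (Fin T → Ω) → Prop) [DecidablePred E] :
    iidProb p T E = ∑ xs ∈ univ.filter E, ∏ t, p (xs t) := by
  rw [iidProb]
  congr

lemma sum_prod_eq_pow (g : Ω → ℝ) (T : ℕ) : ∑ xs : Fin T → Ω, ∏ t, g (xs t) = (∑ x, g x) ^ T := by
  rw [sum_pow', Fintype.piFinset_univ]

variable {p : Ω → ℝ} {T : ℕ}

lemma iidProb_mono (hp : ∀ x, 0 ≤ p x) {E F : (Fin T → Ω) → Prop} (h : ∀ xs, E xs → F xs) :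
    iidProb p T E ≤ iidProb p T F :=
  sum_le_sum_of_subset_of_nonneg (monotone_filter_right _ fun xs _ => h xs) fun xs _ _ =>
    prod_nonneg fun t _ => hp (xs t)

lemma iidProb_add_iidProb_not (hp1 : ∑ x, p x = 1) (E : (Fin T → Ω) → Prop) :
    iidProb p T E + iidProb p T (fun xs => ¬ E xs) = 1 := by
  rw [iidProb, iidProb, sum_filter_add_sum_filter_not, sum_prod_eq_pow, hp1, one_pow]

lemma iidProb_or_le (hp : ∀ x, 0 ≤ p x) (E F : (Fin T → Ω) → Prop) :
    iidProb p T (fun xs => E xs ∨ F xs) ≤ iidProb p T E + iidProb p T F := by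
  rw [iidProb, iidProb, iidProb, sum_filter, sum_filter, sum_filter, ← sum_add_distrib]
  refine sum_le_sum fun xs _ => ?_
  have hw : 0 ≤ ∏ t, p (xs t) := prod_nonneg fun t _ => hp (xs t)
  split_ifs <;> first | linarith | tauto

lemma iidProb_exists_le (hp : ∀ x, 0 ≤ p x) {ι : Type*} [Fintype ι]
    (E : ι → (Fin T → Ω) → Prop) :
    iidProb p T (fun xs => ∃ i, E i xs) ≤ ∑ i, iidProb p T (E i) := by
  have hw : ∀ xs : Fin T → Ω, 0 ≤ ∏ t, p (xs t) := fun xs => prod_nonneg fun t _ => hp (xs t)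
  simp only [iidProb, sum_filter]
  rw [sum_comm]
  refine sum_le_sum fun xs _ => ?_
  split_ifs with h
  · obtain ⟨i, hi⟩ := h
    calc ∏ t, p (xs t) = if E i xs then ∏ t, p (xs t) else 0 := (if_pos hi).symm
      _ ≤ ∑ j, if E j xs then ∏ t, p (xs t) else 0 :=
        single_le_sum (f := fun j => if E j xs then ∏ t, p (xs t) else 0)
          (fun j _ => by split_ifs <;> simp [hw xs]) (mem_univ i)
  · exact sum_nonneg fun j _ => by split_ifs <;> simp [hw xs]

lemma iidProb_le_exp_of_le_sum {ψ : Ω → ℝ} {c s : ℝ} (hp : ∀ x, 0 ≤ p x) (hp1 : ∑ x, p x = 1)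
    (hψ0 : ∑ x, p x * ψ x = 0) (hψc : ∀ x, |ψ x| ≤ c) (hc : 0 < c) (hs : 0 ≤ s) :
    iidProb p T (fun xs => T * s ≤ ∑ t, ψ (xs t)) ≤ exp (-(T * s ^ 2 / (2 * c ^ 2))) := by
  -- the exponential moment method, with the optimal exponent `l = s / c²`
  set l := s / c ^ 2 with hl_def
  have hl : 0 ≤ l := by positivity
  set g : Ω → ℝ := fun x => p x * exp (l * ψ x)
  have hg : ∀ x, 0 ≤ g x := fun x => mul_nonneg (hp x) (exp_nonneg _)
  have hmarkov : ∀ xs : Fin T → Ω, T * s ≤ ∑ t, ψ (xs t) →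
      ∏ t, p (xs t) ≤ exp (-(l * (T * s))) * ∏ t, g (xs t) := fun xs hxs => by
    have hexp : 1 ≤ exp (-(l * (T * s)) + l * ∑ t, ψ (xs t)) := one_le_exp (by nlinarith)
    calc ∏ t, p (xs t) ≤ (∏ t, p (xs t)) * exp (-(l * (T * s)) + l * ∑ t, ψ (xs t)) :=
          le_mul_of_one_le_right (prod_nonneg fun t _ => hp (xs t)) hexp
      _ = exp (-(l * (T * s))) * ∏ t, g (xs t) := by
          rw [prod_mul_distrib, ← exp_sum, ← mul_sum, exp_add]; ring
  calc iidProb p T (fun xs => T * s ≤ ∑ t, ψ (xs t))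
      ≤ ∑ xs ∈ univ.filter (fun xs : Fin T → Ω => T * s ≤ ∑ t, ψ (xs t)),
          exp (-(l * (T * s))) * ∏ t, g (xs t) :=
        sum_le_sum fun xs hxs => hmarkov xs (mem_filter.1 hxs).2
    _ ≤ ∑ xs : Fin T → Ω, exp (-(l * (T * s))) * ∏ t, g (xs t) :=
        sum_le_sum_of_subset_of_nonneg (filter_subset _ _) fun xs _ _ =>
          mul_nonneg (exp_nonneg _) (prod_nonneg fun t _ => hg (xs t))
    _ = exp (-(l * (T * s))) * (∑ x, g x) ^ T := by rw [← mul_sum, sum_prod_eq_pow]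
    _ ≤ exp (-(l * (T * s))) * exp (l ^ 2 * c ^ 2 / 2) ^ T := by
        gcongr
        · exact sum_nonneg fun x _ => hg x
        · exact sum_mul_exp_le_exp_sq hp hp1 hψ0 hψc hc l
    _ = exp (-(T * s ^ 2 / (2 * c ^ 2))) := by
        rw [← exp_nat_mul, ← exp_add]
        congr 1
        rw [hl_def]
        field_simp
        ring

lemma iidProb_lt_abs_sum_le {ψ : Ω → ℝ} {c s : ℝ} (hp : ∀ x, 0 ≤ p x) (hp1 : ∑ x, p x = 1)
    (hψ0 : ∑ x, p x * ψ x = 0) (hψc : ∀ x, |ψ x| ≤ c) (hc : 0 < c) (hs : 0 ≤ s) :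
    iidProb p T (fun xs => T * s < |∑ t, ψ (xs t)|) ≤ 2 * exp (-(T * s ^ 2 / (2 * c ^ 2))) := by
  have hnegψ0 : ∑ x, p x * -ψ x = 0 := by simp [mul_neg, sum_neg_distrib, hψ0]
  calc iidProb p T (fun xs => T * s < |∑ t, ψ (xs t)|)
      ≤ iidProb p T (fun xs => T * s ≤ ∑ t, ψ (xs t) ∨ T * s ≤ ∑ t, -ψ (xs t)) :=
        iidProb_mono hp fun xs h => by
          rw [sum_neg_distrib]
          rcases lt_abs.1 h with h | h
          exacts [Or.inl h.le, Or.inr h.le]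
    _ ≤ _ := iidProb_or_le hp _ _
    _ ≤ exp (-(T * s ^ 2 / (2 * c ^ 2))) + exp (-(T * s ^ 2 / (2 * c ^ 2))) :=
        add_le_add (iidProb_le_exp_of_le_sum hp hp1 hψ0 hψc hc hs)
          (iidProb_le_exp_of_le_sum (ψ := fun x => -ψ x) hp hp1 hnegψ0
            (fun x => (abs_neg (ψ x)).trans_le (hψc x)) hc hs)
    _ = 2 * exp (-(T * s ^ 2 / (2 * c ^ 2))) := (two_mul _).symm

lemma one_sub_le_iidProb_forall_abs_sum_le {ι : Type*} [Fintype ι] {ψ : ι → Ω → ℝ} {c s : ℝ}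
    (hp : ∀ x, 0 ≤ p x) (hp1 : ∑ x, p x = 1) (hψ0 : ∀ i, ∑ x, p x * ψ i x = 0)
    (hψc : ∀ i x, |ψ i x| ≤ c) (hc : 0 < c) (hs : 0 ≤ s) :
    1 - Fintype.card ι * (2 * exp (-(T * s ^ 2 / (2 * c ^ 2)))) ≤
      iidProb p T (fun xs => ∀ i, |∑ t, ψ i (xs t)| ≤ T * s) := by
  have hbad : iidProb p T (fun xs => ¬ ∀ i, |∑ t, ψ i (xs t)| ≤ T * s) ≤
      Fintype.card ι * (2 * exp (-(T * s ^ 2 / (2 * c ^ 2)))) :=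
    calc iidProb p T (fun xs => ¬ ∀ i, |∑ t, ψ i (xs t)| ≤ T * s)
        ≤ iidProb p T (fun xs => ∃ i, T * s < |∑ t, ψ i (xs t)|) :=
          iidProb_mono hp fun xs h => by simpa only [not_forall, not_le] using h
      _ ≤ ∑ i, iidProb p T (fun xs => T * s < |∑ t, ψ i (xs t)|) := iidProb_exists_le hp _
      _ ≤ ∑ _i : ι, 2 * exp (-(T * s ^ 2 / (2 * c ^ 2))) :=
          sum_le_sum fun i _ => iidProb_lt_abs_sum_le hp hp1 (hψ0 i) (hψc i) hc hs
      _ = _ := by rw [sum_const, card_univ, nsmul_eq_mul]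
  linarith [iidProb_add_iidProb_not (T := T) hp1 (fun xs => ∀ i, |∑ t, ψ i (xs t)| ≤ T * s)]

end Sampling

section Divergences

variable {Ω : Type*}

lemma sum_mul_log_sum_div_sum_le (s : Finset Ω) {p q : Ω → ℝ} (hp : ∀ x ∈ s, 0 ≤ p x)
    (hq : ∀ x ∈ s, 0 < q x) :
    (∑ x ∈ s, p x) * log ((∑ x ∈ s, p x) / ∑ x ∈ s, q x) ≤ ∑ x ∈ s, p x * log (p x / q x) := by
  rcases s.eq_empty_or_nonempty with rfl | hs
  · simp
  set a := ∑ x ∈ s, p x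
  set b := ∑ x ∈ s, q x
  have hb : 0 < b := sum_pos hq hs
  have jensen := convexOn_mul_log.map_sum_le (t := s) (w := fun x => q x / b)
    (p := fun x => p x / q x) (fun x hx => div_nonneg (hq x hx).le hb.le)
    (by rw [← sum_div]; exact div_self hb.ne')
    (fun x hx => Set.mem_Ici.2 (div_nonneg (hp x hx) (hq x hx).le))
  have hmean : ∑ x ∈ s, q x / b * (p x / q x) = a / b := by
    rw [sum_congr rfl fun x hx => ?_, ← sum_div]
    field_simp [(hq x hx).ne']
  have hterm : ∀ x ∈ s, q x / b * (p x / q x * log (p x / q x)) = p x * log (p x / q x) / b :=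
    fun x hx => by field_simp [(hq x hx).ne']
  simp only [smul_eq_mul, hmean, sum_congr rfl hterm, ← sum_div] at jensen
  have := mul_le_mul_of_nonneg_left jensen hb.le
  rwa [mul_div_cancel₀ _ hb.ne', ← mul_assoc, mul_div_cancel₀ _ hb.ne'] at this

lemma binary_pinsker {a b : ℝ} (hb : 0 < b) (hba : b ≤ a) (ha : a < 1) :
    2 * (a - b) ^ 2 ≤ a * log (a / b) + (1 - a) * log ((1 - a) / (1 - b)) := by
  set g : ℝ → ℝ := fun x => a * (log a - log x) + (1 - a) * (log (1 - a) - log (1 - x))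
    - 2 * (a - x) ^ 2 with hg
  have hderiv : ∀ x ∈ Set.Ioo 0 1, HasDerivAt g (-a / x + (1 - a) / (1 - x) + 4 * (a - x)) x := by
    rintro x ⟨hx0, hx1⟩
    have h1x : HasDerivAt (fun x : ℝ => 1 - x) (-1) x := by
      simpa using (hasDerivAt_id x).const_sub 1
    have hax : HasDerivAt (fun x : ℝ => a - x) (-1) x := by
      simpa using (hasDerivAt_id x).const_sub a
    refine (((((hasDerivAt_log hx0.ne').const_sub (log a)).const_mul a).fun_add
      ((((hasDerivAt_log (sub_ne_zero.2 hx1.ne')).comp x h1x).const_sub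
        (log (1 - a))).const_mul (1 - a))).fun_sub ((hax.fun_pow 2).const_mul 2)).congr_deriv ?_
    field_simp [sub_ne_zero.2 hx1.ne']
    ring
  have hmem : ∀ {x}, x ∈ Set.Icc b a → x ∈ Set.Ioo 0 1 := fun hx =>
    ⟨hb.trans_le hx.1, hx.2.trans_lt ha⟩
  have hanti : AntitoneOn g (Set.Icc b a) := by
    refine antitoneOn_of_deriv_nonpos (convex_Icc b a)
      (fun x hx => (hderiv x (hmem hx)).continuousAt.continuousWithinAt) ?_ ?_
    · rw [interior_Icc]
      exact fun x hx => (hderiv x (hmem (Set.Ioo_subset_Icc_self hx))).differentiableAt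
        |>.differentiableWithinAt
    · rw [interior_Icc]
      intro x hx
      obtain ⟨hx0, hx1⟩ := hmem (Set.Ioo_subset_Icc_self hx)
      rw [(hderiv x ⟨hx0, hx1⟩).deriv]
      have hfactor : -a / x + (1 - a) / (1 - x) + 4 * (a - x) =
          (a - x) * (4 * x * (1 - x) - 1) / (x * (1 - x)) := by
        field_simp [sub_ne_zero.2 hx1.ne']
        ring
      rw [hfactor]
      apply div_nonpos_of_nonpos_of_nonneg _ (mul_nonneg hx0.le (by linarith))
      nlinarith [sq_nonneg (2 * x - 1), hx.2]
  have hgb := hanti ⟨le_rfl, hba⟩ ⟨hba, le_rfl⟩ hba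
  simp only [hg, sub_self, mul_zero, add_zero, ne_eq, OfNat.ofNat_ne_zero, not_false_eq_true,
    zero_pow] at hgb
  rw [log_div (hb.trans_le hba).ne' hb.ne', log_div (by linarith) (by linarith)]
  linarith

variable [Fintype Ω]

def KLdiv (P Q : Ω → ℝ) : ℝ := ∑ x, P x * log (P x / Q x)

/-- Pinsker's inequality. -/
lemma TVdist_le_sqrt_KLdiv {P Q : Ω → ℝ} (hP : ∀ x, 0 < P x) (hQ : ∀ x, 0 < Q x)
    (hP1 : ∑ x, P x = 1) (hQ1 : ∑ x, Q x = 1) : TVdist P Q ≤ √(KLdiv P Q / 2) := by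
  set A := univ.filter fun x => Q x ≤ P x
  set B := univ.filter fun x => ¬ Q x ≤ P x
  have hsplit (f : Ω → ℝ) : ∑ x ∈ A, f x + ∑ x ∈ B, f x = ∑ x, f x :=
    sum_filter_add_sum_filter_not _ _ f
  set a := ∑ x ∈ A, P x
  set b := ∑ x ∈ A, Q x
  have hPB : ∑ x ∈ B, P x = 1 - a := by linarith [hsplit P]
  have hQB : ∑ x ∈ B, Q x = 1 - b := by linarith [hsplit Q]
  -- the total variation is attained on the event `A = {Q ≤ P}`
  have hTV : TVdist P Q = a - b := by
    have hA : ∑ x ∈ A, |P x - Q x| = a - b := by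
      rw [← sum_sub_distrib]
      exact sum_congr rfl fun x hx => abs_of_nonneg (sub_nonneg.2 (mem_filter.1 hx).2)
    have hB : ∑ x ∈ B, |P x - Q x| = (1 - b) - (1 - a) := by
      rw [← hPB, ← hQB, ← sum_sub_distrib]
      exact sum_congr rfl fun x hx => by
        rw [abs_of_neg (by linarith [not_le.1 (mem_filter.1 hx).2])]; ring
    rw [TVdist, ← hsplit, hA, hB]
    ring
  rcases A.eq_empty_or_nonempty with hAe | hAne
  · rw [hTV, show a - b = 0 by simp [a, b, hAe]]
    positivity
  rcases B.eq_empty_or_nonempty with hBe | hBne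
  · have hPB0 : ∑ x ∈ B, P x = 0 := by simp [hBe]
    have hQB0 : ∑ x ∈ B, Q x = 0 := by simp [hBe]
    rw [hTV, show a - b = 0 by linarith]
    positivity
  have hba : b ≤ a := sum_le_sum fun x hx => (mem_filter.1 hx).2
  have hbinary := binary_pinsker (sum_pos (fun x _ => hQ x) hAne) hba
    (by linarith [sum_pos (fun x _ => hP x) hBne])
  have hlogsum : a * log (a / b) + (1 - a) * log ((1 - a) / (1 - b)) ≤ KLdiv P Q := by
    rw [KLdiv, ← hsplit, ← hPB, ← hQB]
    exact add_le_add (sum_mul_log_sum_div_sum_le A (fun x _ => (hP x).le) fun x _ => hQ x)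
      (sum_mul_log_sum_div_sum_le B (fun x _ => (hP x).le) fun x _ => hQ x)
  rw [hTV, ← sqrt_sq (by linarith : 0 ≤ a - b)]
  exact sqrt_le_sqrt (by linarith)

lemma TVdist_le_sqrt_add_sqrt_of_KLdiv_le {P Q : Ω → ℝ} (hP : ∀ x, 0 < P x) (hQ : ∀ x, 0 < Q x)
    (hP1 : ∑ x, P x = 1) (hQ1 : ∑ x, Q x = 1) {a s : ℝ} (hKL : KLdiv P Q ≤ a + 2 * s) :
    TVdist P Q ≤ √(a / 2) + √s :=
  calc TVdist P Q ≤ √(KLdiv P Q / 2) := TVdist_le_sqrt_KLdiv hP hQ hP1 hQ1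
    _ ≤ √(a / 2 + s) := sqrt_le_sqrt (by linarith)
    _ ≤ √(a / 2) + √s := sqrt_add_le_sqrt_add_sqrt _ _

end Divergences

section Likelihood

variable {Ω : Type*} [Fintype Ω]

lemma abs_sub_le_TVdist {P Q : Ω → ℝ} (hP1 : ∑ x, P x = 1) (hQ1 : ∑ x, Q x = 1) (x : Ω) :
    |P x - Q x| ≤ TVdist P Q := by
  have herase : ∑ y ∈ univ.erase x, (P y - Q y) = -(P x - Q x) := by
    rw [sum_erase_eq_sub (mem_univ x), sum_sub_distrib, hP1, hQ1]
    ring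
  have hrest : |P x - Q x| ≤ ∑ y ∈ univ.erase x, |P y - Q y| := by
    rw [← abs_neg, ← herase]
    exact abs_sum_le_sum_abs _ _
  rw [TVdist, ← add_sum_erase _ _ (mem_univ x)]
  linarith

lemma KLdiv_le_inv_mul_TVdist {P Q : Ω → ℝ} {β : ℝ} (hβ : 0 < β) (hP : ∀ x, 0 < P x)
    (hQ : ∀ x, β ≤ Q x) (hP1 : ∑ x, P x = 1) (hQ1 : ∑ x, Q x = 1) :
    KLdiv P Q ≤ β⁻¹ * TVdist P Q := by
  have hterm (x : Ω) : log (P x / Q x) ≤ β⁻¹ * TVdist P Q := by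
    have hQx : 0 < Q x := hβ.trans_le (hQ x)
    calc log (P x / Q x) ≤ P x / Q x - 1 := log_le_sub_one_of_pos (div_pos (hP x) hQx)
      _ = (Q x)⁻¹ * (P x - Q x) := by field_simp
      _ ≤ (Q x)⁻¹ * |P x - Q x| := by gcongr; exact le_abs_self _
      _ ≤ β⁻¹ * |P x - Q x| := by gcongr; exact hQ x
      _ ≤ β⁻¹ * TVdist P Q := by gcongr; exact abs_sub_le_TVdist hP1 hQ1 x
  calc KLdiv P Q ≤ ∑ x, P x * (β⁻¹ * TVdist P Q) :=
        sum_le_sum fun x _ => mul_le_mul_of_nonneg_left (hterm x) (hP x).le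
    _ = β⁻¹ * TVdist P Q := by rw [← sum_mul, hP1, one_mul]

lemma abs_sub_sum_mul_le {p φ : Ω → ℝ} {a b : ℝ} (hp : ∀ x, 0 ≤ p x) (hp1 : ∑ x, p x = 1)
    (hφ : ∀ x, φ x ∈ Set.Icc a b) (x : Ω) : |φ x - ∑ y, p y * φ y| ≤ b - a := by
  have hmean : ∑ y, p y * φ y ∈ Set.Icc a b := by
    constructor
    · calc a = ∑ y, p y * a := by rw [← sum_mul, hp1, one_mul]
        _ ≤ ∑ y, p y * φ y := sum_le_sum fun y _ => mul_le_mul_of_nonneg_left (hφ y).1 (hp y)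
    · calc ∑ y, p y * φ y ≤ ∑ y, p y * b :=
            sum_le_sum fun y _ => mul_le_mul_of_nonneg_left (hφ y).2 (hp y)
        _ = b := by rw [← sum_mul, hp1, one_mul]
  exact abs_sub_le_of_le_of_le (hφ x).1 (hφ x).2 hmean.1 hmean.2

lemma abs_log_sub_sum_mul_log_le {P Q : Ω → ℝ} {β : ℝ} (hβ : 0 < β) (hP : ∀ x, 0 ≤ P x)
    (hP1 : ∑ x, P x = 1) (hQ : ∀ x, β ≤ Q x) (hQ1 : ∑ x, Q x = 1) (x : Ω) :
    |log (Q x) - ∑ y, P y * log (Q y)| ≤ -log β := by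
  have hQle (y : Ω) : Q y ≤ 1 :=
    hQ1 ▸ single_le_sum (fun z _ => hβ.le.trans (hQ z)) (mem_univ y)
  have hrange (y : Ω) : log (Q y) ∈ Set.Icc (log β) 0 :=
    ⟨log_le_log hβ (hQ y), log_nonpos (hβ.le.trans (hQ y)) (hQle y)⟩
  simpa using abs_sub_sum_mul_le hP hP1 hrange x

lemma KLdiv_sub_KLdiv {P Q₀ Q₁ : Ω → ℝ} (hP : ∀ x, 0 < P x) (hQ₀ : ∀ x, 0 < Q₀ x)
    (hQ₁ : ∀ x, 0 < Q₁ x) :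
    KLdiv P Q₁ - KLdiv P Q₀ = ∑ x, P x * log (Q₀ x) - ∑ x, P x * log (Q₁ x) := by
  simp only [KLdiv, ← sum_sub_distrib]
  refine sum_congr rfl fun x _ => ?_
  rw [log_div (hP x).ne' (hQ₁ x).ne', log_div (hP x).ne' (hQ₀ x).ne']
  ring

lemma KLdiv_le_KLdiv_add_of_prod_le {P Q₀ Q₁ : Ω → ℝ} (hP : ∀ x, 0 < P x)
    (hQ₀ : ∀ x, 0 < Q₀ x) (hQ₁ : ∀ x, 0 < Q₁ x) {T : ℕ} (hT : 0 < T) {s : ℝ} {xs : Fin T → Ω}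
    (hlik : ∏ t, Q₀ (xs t) ≤ ∏ t, Q₁ (xs t))
    (h₀ : |∑ t, (log (Q₀ (xs t)) - ∑ x, P x * log (Q₀ x))| ≤ T * s)
    (h₁ : |∑ t, (log (Q₁ (xs t)) - ∑ x, P x * log (Q₁ x))| ≤ T * s) :
    KLdiv P Q₁ ≤ KLdiv P Q₀ + 2 * s := by
  have hloglik : ∑ t, log (Q₀ (xs t)) ≤ ∑ t, log (Q₁ (xs t)) := by
    rw [← log_prod fun t _ => (hQ₀ (xs t)).ne', ← log_prod fun t _ => (hQ₁ (xs t)).ne']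
    exact log_le_log (prod_pos fun t _ => hQ₀ (xs t)) hlik
  simp only [sum_sub_distrib, sum_const, card_univ, Fintype.card_fin, nsmul_eq_mul] at h₀ h₁
  have hmean : (T : ℝ) * ∑ x, P x * log (Q₀ x) ≤ T * (∑ x, P x * log (Q₁ x) + 2 * s) := by
    linarith [abs_le.1 h₀, abs_le.1 h₁]
  linarith [le_of_mul_le_mul_left hmean (Nat.cast_pos.2 hT), KLdiv_sub_KLdiv hP hQ₀ hQ₁]

end Likelihood

lemma exp_neg_mul_sq_sqrt_div_eq_one_div_sq {c : ℝ} {T k : ℕ} (hc : 0 < c) (hT : 0 < T)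
    (hk : 1 ≤ k) : exp (-(T * √(4 * c ^ 2 * log k / T) ^ 2 / (2 * c ^ 2))) = 1 / (k : ℝ) ^ 2 := by
  have hk0 : (0 : ℝ) < k := by exact_mod_cast hk
  have hT0 : (0 : ℝ) < T := by exact_mod_cast hT
  rw [sq_sqrt (by have := log_nonneg (Nat.one_le_cast.2 hk : (1 : ℝ) ≤ k); positivity),
    show (T : ℝ) * (4 * c ^ 2 * log k / T) / (2 * c ^ 2) = log ((k : ℝ) ^ 2) by
      rw [log_pow]; field_simp; push_cast; ring,
    exp_neg, exp_log (by positivity), one_div]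

theorem stmt14_general (ε : ℝ) (m T k : ℕ) (hm : 0 < m) (hT : 0 < T) (hk : 2 ≤ k)
    (P : (Fin m → Bool) → ℝ) (Q : Fin (k + 1) → (Fin m → Bool) → ℝ)
    (hPpos : ∀ x, Real.exp (-(m : ℝ)) ≤ P x) (hPsum : ∑ x, P x = 1)
    (hQpos : ∀ i x, Real.exp (-(m : ℝ)) ≤ Q i x) (hQsum : ∀ i, ∑ x, Q i x = 1)
    (hTV0 : TVdist P (Q 0) ≤ ε) :
    1 - 2 * (k + 1) / (k : ℝ) ^ 2 ≤
      ∑ xs ∈ Finset.univ.filter (fun xs : Fin T → (Fin m → Bool) =>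
          ∀ j : Fin (k + 1),
            (∀ i : Fin (k + 1), ∏ t, Q i (xs t) ≤ ∏ t, Q j (xs t)) →
              TVdist P (Q j) ≤
                (4 * (m : ℝ) ^ 2 * Real.log k / T) ^ ((1 : ℝ) / 4) +
                  Real.sqrt (Real.exp m * ε / 2)),
        ∏ t, P (xs t) := by
  have hP : ∀ x, 0 < P x := fun x => (exp_pos _).trans_le (hPpos x)
  have hQ : ∀ i x, 0 < Q i x := fun i x => (exp_pos _).trans_le (hQpos i x)
  set X : ℝ := 4 * (m : ℝ) ^ 2 * log k / T
  have hX0 : 0 ≤ X := by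
    have := log_nonneg (by exact_mod_cast (by omega : 1 ≤ k) : (1 : ℝ) ≤ k)
    positivity
  have hcentred (i : Fin (k + 1)) : ∑ x, P x * (log (Q i x) - ∑ y, P y * log (Q i y)) = 0 := by
    simp [mul_sub, sum_sub_distrib, ← sum_mul, hPsum]
  have hbounded (i : Fin (k + 1)) (x) : |log (Q i x) - ∑ y, P y * log (Q i y)| ≤ m := by
    simpa using abs_log_sub_sum_mul_log_le (exp_pos _) (fun x => (hP x).le) hPsum (hQpos i)
      (hQsum i) x
  have hconc := one_sub_le_iidProb_forall_abs_sum_le (T := T) (fun x => (hP x).le) hPsum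
    hcentred hbounded (by positivity) (sqrt_nonneg X)
  rw [exp_neg_mul_sq_sqrt_div_eq_one_div_sq (by positivity) hT (by omega), Fintype.card_fin]
    at hconc
  rw [← iidProb_eq_sum_filter]
  refine (le_of_eq_of_le ?_ hconc).trans
    (iidProb_mono (fun x => (hP x).le) fun xs hxs j hj => ?_)
  · push_cast
    ring
  have hKL := KLdiv_le_KLdiv_add_of_prod_le hP (hQ 0) (hQ j) hT (hj 0) (hxs 0) (hxs j)
  have hKL0 : KLdiv P (Q 0) ≤ exp m * ε := by
    refine (KLdiv_le_inv_mul_TVdist (exp_pos _) hP (hQpos 0) hPsum (hQsum 0)).trans ?_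
    rw [exp_neg, inv_inv]
    gcongr
  calc TVdist P (Q j) ≤ √(exp m * ε / 2) + √(√X) :=
        TVdist_le_sqrt_add_sqrt_of_KLdiv_le hP (hQ j) hPsum (hQsum j) (by linarith)
    _ = X ^ ((1 : ℝ) / 4) + √(exp m * ε / 2) := by
        rw [add_comm, sqrt_eq_rpow, sqrt_eq_rpow, ← rpow_mul hX0]
        norm_num

/-- Maximum-likelihood selection: if `TV(P, Q 0) ≤ ε` and all the distributions
`P, Q 0, …, Q k` put mass at least `e^{-m}` on every point, then with probability at least
`1 - 2(k+1)/k²` over `T` i.i.d. samples from `P`, every index `j` maximizing the likelihood of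
the samples satisfies `TV(P, Q j) ≤ (4m² ln k / T)^{1/4} + √(e^m ε / 2)`. -/
theorem stmt14 (ε : ℝ) (hε : 0 < ε) (m T k : ℕ) (hm : 0 < m) (hT : 0 < T) (hk : 2 ≤ k)
    (P : (Fin m → Bool) → ℝ) (Q : Fin (k + 1) → (Fin m → Bool) → ℝ)
    (hPpos : ∀ x, Real.exp (-(m : ℝ)) ≤ P x) (hPsum : ∑ x, P x = 1)
    (hQpos : ∀ i x, Real.exp (-(m : ℝ)) ≤ Q i x) (hQsum : ∀ i, ∑ x, Q i x = 1)
    (hTV0 : TVdist P (Q 0) ≤ ε) :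
    1 - 2 * (k + 1) / (k : ℝ) ^ 2 ≤
      ∑ xs ∈ Finset.univ.filter (fun xs : Fin T → (Fin m → Bool) =>
          ∀ j : Fin (k + 1),
            (∀ i : Fin (k + 1), ∏ t, Q i (xs t) ≤ ∏ t, Q j (xs t)) →
              TVdist P (Q j) ≤
                (4 * (m : ℝ) ^ 2 * Real.log k / T) ^ ((1 : ℝ) / 4) +
                  Real.sqrt (Real.exp m * ε / 2)),
        ∏ t, P (xs t) :=
  stmt14_general ε m T k hm hT hk P Q hPpos hPsum hQpos hQsum hTV0
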